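/- For real γ > -1 and a positive integer μ, as k → ∞ (k real, positive), ∫₀^∞ s^γ ln^μ(s) e^{-ks} ds is asymptotically equivalent to (-1)^μ Γ(γ+1) ln^μ(k) / k^{γ+1}. -/

import Mathlib

/-!
Substituting `s = t / k` and writing `log (t / k) = log t - log k`, the binomial theorem gives
`k ^ (γ + 1) ∫₀^∞ s^γ (log s)^μ e^{-ks} ds = ∑ₘ (μ choose m) Γ⁽ᵐ⁾(γ + 1) (-log k)^(μ - m)`,
a polynomial in `-log k` whose leading coefficient is `Γ(γ + 1) ≠ 0`.
The integrals `Γ⁽ᵐ⁾(γ + 1) = ∫₀^∞ t^γ (log t)^m e^{-t} dt` converge because `(log t)^m e^{-t}`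
is `O(t^(-ε))` at `0` for every `ε > 0` and decays faster than any power at `∞`.
-/

open MeasureTheory Real Filter Asymptotics Set Finset Topology

theorem isBigO_log_pow_mul_exp_neg_atTop (m : ℕ) (a : ℝ) :
    (fun t : ℝ => log t ^ m * exp (-t)) =O[atTop] (· ^ (-a)) := by
  induction m generalizing a with
  | zero => simpa using (isLittleO_exp_neg_mul_rpow_atTop one_pos (-a)).isBigO
  | succ m ih =>
    simpa only [smul_eq_mul, pow_succ', mul_assoc] using
      isBigO_rpow_top_log_smul (lt_add_one a) (ih (a + 1))

theorem isBigO_log_pow_mul_exp_neg_nhdsGT_zero (m : ℕ) {ε : ℝ} (hε : 0 < ε) :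
    (fun t : ℝ => log t ^ m * exp (-t)) =O[𝓝[>] 0] (· ^ (-(m * ε))) := by
  induction m with
  | zero =>
    simpa using ((continuous_exp.comp continuous_neg).tendsto 0).isBigO_one ℝ |>.mono
      nhdsWithin_le_nhds
  | succ m ih =>
    simpa only [smul_eq_mul, pow_succ', mul_assoc] using
      isBigO_rpow_zero_log_smul (by push_cast; linarith) ih

theorem integrableOn_rpow_mul_log_pow_mul_exp_neg {γ : ℝ} (hγ : -1 < γ) (m : ℕ) :
    IntegrableOn (fun t : ℝ => t ^ γ * log t ^ m * exp (-t)) (Ioi 0) := by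
  have hε : 0 < (γ + 1) / (m + 1) := div_pos (by linarith) (by positivity)
  have hcont : ContinuousOn (fun t : ℝ => log t ^ m * exp (-t)) (Ioi 0) :=
    ((continuousOn_log.mono fun _ ht => ne_of_gt ht).pow m).mul (by fun_prop)
  simpa [mul_assoc] using mellin_convergent_of_isBigO_scalar (s := γ + 1)
    (hcont.locallyIntegrableOn measurableSet_Ioi) (isBigO_log_pow_mul_exp_neg_atTop m (γ + 2))
    (by linarith) (isBigO_log_pow_mul_exp_neg_nhdsGT_zero m hε)
    (by rw [mul_div_assoc', div_lt_iff₀ (by positivity)]; nlinarith)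

/-- The `m`-th derivative of `Γ` at `γ + 1`, by differentiation under the integral sign. -/
noncomputable def logMoment (γ : ℝ) (m : ℕ) : ℝ :=
  ∫ t in Ioi 0, t ^ γ * log t ^ m * exp (-t)

theorem logMoment_zero {γ : ℝ} (hγ : -1 < γ) : logMoment γ 0 = Gamma (γ + 1) := by
  rw [Gamma_eq_integral (by linarith), logMoment]
  simp [mul_comm]

theorem integral_rpow_mul_log_add_pow_mul_exp_neg {γ : ℝ} (hγ : -1 < γ) (n : ℕ) (y : ℝ) :
    ∫ t in Ioi 0, t ^ γ * (log t + y) ^ n * exp (-t) =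
      ∑ m ∈ range (n + 1), n.choose m * logMoment γ m * y ^ (n - m) := by
  have hexpand : ∀ t : ℝ, t ^ γ * (log t + y) ^ n * exp (-t) =
      ∑ m ∈ range (n + 1), (n.choose m * y ^ (n - m)) * (t ^ γ * log t ^ m * exp (-t)) := by
    intro t
    rw [add_pow, mul_sum, sum_mul]
    exact sum_congr rfl fun m _ => by ring
  simp_rw [hexpand]
  rw [integral_finsetSum _ fun m _ => (integrableOn_rpow_mul_log_pow_mul_exp_neg hγ m).const_mul _]
  exact sum_congr rfl fun m _ => by rw [integral_const_mul, logMoment]; ring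

theorem integral_rpow_mul_log_pow_mul_exp_neg_mul (γ : ℝ) (n : ℕ) {k : ℝ} (hk : 0 < k) :
    ∫ s in Ioi 0, s ^ γ * log s ^ n * exp (-k * s) =
      (∫ t in Ioi 0, t ^ γ * (log t - log k) ^ n * exp (-t)) / k ^ (γ + 1) := by
  have hsub := integral_comp_mul_left_Ioi
    (fun t : ℝ => (t / k) ^ γ * log (t / k) ^ n * exp (-t)) 0 hk
  simp only [mul_div_cancel_left₀ _ hk.ne', mul_zero, smul_eq_mul] at hsub
  simp_rw [neg_mul, hsub, rpow_add_one hk.ne']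
  rw [← integral_const_mul, eq_div_iff (by positivity), ← integral_mul_const]
  refine setIntegral_congr_fun measurableSet_Ioi fun t (ht : 0 < t) => ?_
  rw [div_rpow ht.le hk.le, log_div ht.ne' hk.ne']
  field_simp

theorem sum_range_mul_pow_sub {K : Type*} [Field K] (a : ℕ → K) {y : K} (hy : y ≠ 0) (n : ℕ) :
    ∑ m ∈ range (n + 1), a m * y ^ (n - m) = y ^ n * ∑ m ∈ range (n + 1), a m * y⁻¹ ^ m := by
  rw [mul_sum]
  refine sum_congr rfl fun m hm => ?_
  rw [pow_sub₀ y hy (Nat.lt_succ_iff.mp (mem_range.mp hm)), inv_pow]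
  ring

theorem integral_rpow_log_pow_exp_isEquivalent_general (γ : ℝ) (μ : ℕ) (hγ : γ > -1) :
    (fun k : ℝ => ∫ s in Set.Ioi (0 : ℝ),
        s ^ γ * (Real.log s) ^ μ * Real.exp (-k * s)) ~[atTop]
      (fun k : ℝ =>
        (-1 : ℝ) ^ μ * Real.Gamma (γ + 1) * (Real.log k) ^ μ / k ^ (γ + 1)) := by
  set P : ℝ → ℝ := fun x => ∑ m ∈ range (μ + 1), μ.choose m * logMoment γ m * x ^ m
  have hP : Tendsto (fun k => P (-log k)⁻¹) atTop (𝓝 (Gamma (γ + 1))) := by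
    have hcont : Continuous P := by fun_prop
    have hP0 : P 0 = Gamma (γ + 1) := by
      simp [P, sum_range_succ', logMoment_zero hγ]
    rw [← hP0]
    exact (hcont.tendsto 0).comp
      (tendsto_inv_atBot_zero.comp (tendsto_neg_atTop_atBot.comp tendsto_log_atTop))
  have heq : (fun k : ℝ => ∫ s in Ioi 0, s ^ γ * log s ^ μ * exp (-k * s)) =ᶠ[atTop]
      fun k => (-log k) ^ μ / k ^ (γ + 1) * P (-log k)⁻¹ := by
    filter_upwards [eventually_gt_atTop 1] with k hk
    have hlog : -log k ≠ 0 := neg_ne_zero.mpr (log_pos hk).ne'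
    rw [integral_rpow_mul_log_pow_mul_exp_neg_mul γ μ (by linarith)]
    simp_rw [sub_eq_add_neg, integral_rpow_mul_log_add_pow_mul_exp_neg hγ,
      sum_range_mul_pow_sub _ hlog]
    ring
  have hΓ : Gamma (γ + 1) ≠ 0 := (Gamma_pos_of_pos (by linarith)).ne'
  refine ((IsEquivalent.refl.mul ((isEquivalent_const_iff_tendsto hΓ).2 hP)).congr_left
    heq.symm).congr_right (.of_forall fun k => ?_)
  simp only [Pi.mul_apply, Function.const_apply, neg_pow (log k)]
  ring

/-- For real `γ > -1` and a positive integer `μ`, as `k → ∞`,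
`∫₀^∞ s^γ (ln s)^μ e^{-ks} ds ~ (-1)^μ Γ(γ+1) (ln k)^μ / k^(γ+1)`. -/
theorem integral_rpow_log_pow_exp_isEquivalent (γ : ℝ) (μ : ℕ) (hγ : γ > -1)
    (hμ : 1 ≤ μ) :
    (fun k : ℝ => ∫ s in Set.Ioi (0 : ℝ),
        s ^ γ * (Real.log s) ^ μ * Real.exp (-k * s)) ~[atTop]
      (fun k : ℝ =>
        (-1 : ℝ) ^ μ * Real.Gamma (γ + 1) * (Real.log k) ^ μ / k ^ (γ + 1)) :=
  integral_rpow_log_pow_exp_isEquivalent_general γ μ hγ
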